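/- arXiv:2511.05176 — 9 statements merged into one kernel-verified Lean document; each statement's English description precedes it below -/
import Mathlib

section
/- Let F be a field, n, k ∈ ℕ with k ≥ 2, and let w = {(α_j, β_j)}_{j∈[n]} ⊆ F² with α_1, …, α_n pairwise distinct. Let f(X) ∈ F[X] have degree at most k−1 and agree with w on more than √(2(k−1)n) coordinates, i.e., #{j ∈ [n] : f(α_j) = β_j} > √(2(k−1)n). Let R(X,Y) ∈ F[X,Y] be a nonzero polynomial of (1,k−1)-degree at most √(2(k−1)n) such that R(α_j, β_j) = 0 for every j with f(α_j) = β_j. Then R(X, f(X)) is the zero polynomial. -/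
/-!
Substituting `Y = f` into `R` gives a univariate polynomial `R(X, f(X))` whose degree is at most
the `(1, deg f)`-weighted degree of `R`, hence at most `√(2(k-1)n)`. Every agreement point `α_j`
of `f` with `w` is a root of it, and there are more than `√(2(k-1)n)` of these, so it vanishes.
-/

open Polynomial

namespace Polynomial

variable {R : Type*} [CommSemiring R]

theorem natDegree_eval_le_of_weighted_le {p : R[X][X]} {q : R[X]} {m d : ℕ}
    (hq : q.natDegree ≤ m) (hp : ∀ i j : ℕ, (p.coeff j).coeff i ≠ 0 → i + m * j ≤ d) :
    (p.eval q).natDegree ≤ d := by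
  rw [eval_eq_sum, sum_def]
  refine natDegree_sum_le_of_forall_le _ _ fun j hj => ?_
  have hlead : (p.coeff j).coeff (p.coeff j).natDegree ≠ 0 :=
    leadingCoeff_ne_zero.mpr (mem_support_iff.mp hj)
  calc (p.coeff j * q ^ j).natDegree
      ≤ (p.coeff j).natDegree + j * q.natDegree :=
        natDegree_mul_le.trans (Nat.add_le_add_left natDegree_pow_le _)
    _ ≤ (p.coeff j).natDegree + m * j := by rw [mul_comm m]; gcongr
    _ ≤ d := hp _ _ hlead

theorem eval_eval_eq_eval₂_evalRingHom (p : R[X][X]) (q : R[X]) (x : R) :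
    (p.eval q).eval x = p.eval₂ (evalRingHom x) (q.eval x) := by
  simpa using hom_eval₂ p (RingHom.id R[X]) (evalRingHom x) q

end Polynomial

theorem statement1_general (F : Type*) [Field F] (n k : ℕ)
    (α β : Fin n → F) (hα : Function.Injective α)
    (f : Polynomial F) (hf : f.natDegree ≤ k - 1)
    (hAgree : Real.sqrt (2 * ((k : ℝ) - 1) * (n : ℝ)) <
      (Nat.card {j : Fin n // Polynomial.eval (α j) f = β j} : ℝ))
    (R : Polynomial (Polynomial F))
    (hRdeg : ∀ i j : ℕ, (R.coeff j).coeff i ≠ 0 →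
      ((i + (k - 1) * j : ℕ) : ℝ) ≤ Real.sqrt (2 * ((k : ℝ) - 1) * (n : ℝ)))
    (hRvanish : ∀ j : Fin n, Polynomial.eval (α j) f = β j →
      Polynomial.eval₂ (Polynomial.evalRingHom (α j)) (β j) R = 0) :
    Polynomial.eval f R = 0 := by
  classical
  set D := Real.sqrt (2 * ((k : ℝ) - 1) * (n : ℝ))
  have hdeg : (R.eval f).natDegree ≤ ⌊D⌋₊ :=
    natDegree_eval_le_of_weighted_le hf fun i j hij => Nat.le_floor (hRdeg i j hij)
  refine eq_zero_of_natDegree_lt_card_of_eval_eq_zero (ι := {j // f.eval (α j) = β j}) _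
    (hα.comp Subtype.val_injective) (fun j => ?_) ?_
  · rw [Function.comp_apply, eval_eval_eq_eval₂_evalRingHom, j.2, hRvanish j j.2]
  · rw [← Nat.card_eq_fintype_card, ← Nat.cast_lt (α := ℝ)]
    calc ((R.eval f).natDegree : ℝ) ≤ ⌊D⌋₊ := Nat.cast_le.mpr hdeg
      _ ≤ D := Nat.floor_le (Real.sqrt_nonneg _)
      _ < _ := hAgree

theorem statement1 (F : Type*) [Field F] (n k : ℕ) (hk : 2 ≤ k)
    (α β : Fin n → F) (hα : Function.Injective α)
    (f : Polynomial F) (hf : f.natDegree ≤ k - 1)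
    (hAgree : Real.sqrt (2 * ((k : ℝ) - 1) * (n : ℝ)) <
      (Nat.card {j : Fin n // Polynomial.eval (α j) f = β j} : ℝ))
    (R : Polynomial (Polynomial F)) (hR0 : R ≠ 0)
    (hRdeg : ∀ i j : ℕ, (R.coeff j).coeff i ≠ 0 →
      ((i + (k - 1) * j : ℕ) : ℝ) ≤ Real.sqrt (2 * ((k : ℝ) - 1) * (n : ℝ)))
    (hRvanish : ∀ j : Fin n, Polynomial.eval (α j) f = β j →
      Polynomial.eval₂ (Polynomial.evalRingHom (α j)) (β j) R = 0) :
    Polynomial.eval f R = 0 :=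
  statement1_general F n k α β hα f hf hAgree R hRdeg hRvanish
end

section
/- Let F be a field, Q(X,Y) ∈ F[X,Y], (α,β) ∈ F², m ∈ ℕ, and f(X) ∈ F[X] with f(α) = β. If Q vanishes with multiplicity at least m at (α,β), then (X−α)^m divides the univariate polynomial Q(X, f(X)). -/
/-!
STATEMENT 2: Let F be a field, Q(X,Y) ∈ F[X,Y], (α,β) ∈ F², m ∈ ℕ, and f(X) ∈ F[X] with
f(α) = β. If Q vanishes with multiplicity at least m at (α,β), then (X−α)^m divides the
univariate polynomial Q(X, f(X)).

Bivariate polynomials in F[X,Y] are represented as `Polynomial (Polynomial F)` with outer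
variable Y and inner variable X.  The (e1,e2)-th Hasse derivative of Q evaluated at (α,β) is
the coefficient of X^{e1}·Y^{e2} in the shifted polynomial Q(X+α, Y+β); hence Q vanishes with
multiplicity at least m at (α,β) iff all monomials of total degree < m of Q(X+α, Y+β) vanish.
-/

/-- The shifted bivariate polynomial `Q(X+α, Y+β)`. -/
noncomputable def taylorShift2 {F : Type*} [CommRing F] (Q : Polynomial (Polynomial F))
    (α β : F) : Polynomial (Polynomial F) :=
  (Q.comp (Polynomial.X + Polynomial.C (Polynomial.C β))).map
    (Polynomial.eval₂RingHom Polynomial.C (Polynomial.X + Polynomial.C α))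

/-- `Q` vanishes with multiplicity at least `m` at `(α,β)`:  all Hasse derivatives of order
less than `m` vanish at `(α,β)`, i.e. all coefficients of monomials `X^{e1}·Y^{e2}` with
`e1 + e2 < m` of `Q(X+α, Y+β)` are zero. -/
def VanishesWithMult {F : Type*} [CommRing F] (Q : Polynomial (Polynomial F))
    (α β : F) (m : ℕ) : Prop :=
  ∀ e1 e2 : ℕ, e1 + e2 < m → ((taylorShift2 Q α β).coeff e2).coeff e1 = 0

theorem statement2 (F : Type*) [Field F] (Q : Polynomial (Polynomial F)) (α β : F) (m : ℕ)
    (f : Polynomial F) (hf : Polynomial.eval α f = β)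
    (hQ : VanishesWithMult Q α β m) :
    (Polynomial.X - Polynomial.C α) ^ m ∣ Polynomial.eval f Q := by
  classical
  set τ : Polynomial F →+* Polynomial F :=
    Polynomial.eval₂RingHom Polynomial.C (Polynomial.X + Polynomial.C α) with hτ
  set τ' : Polynomial F →+* Polynomial F :=
    Polynomial.eval₂RingHom Polynomial.C (Polynomial.X - Polynomial.C α) with hτ'
  have hτcomp : ∀ p : Polynomial F, τ p = p.comp (Polynomial.X + Polynomial.C α) := by
    intro p; rfl
  have hτ'comp : ∀ p : Polynomial F, τ' p = p.comp (Polynomial.X - Polynomial.C α) := by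
    intro p; rfl
  have hττ' : ∀ p : Polynomial F, τ' (τ p) = p := by
    intro p
    rw [hτcomp, hτ'comp, Polynomial.comp_assoc]
    simp
  set R := taylorShift2 Q α β with hR
  set g : Polynomial F := f.comp (Polynomial.X + Polynomial.C α) - Polynomial.C β with hg
  -- key identity: τ (eval f Q) = eval g R
  have key : τ (Polynomial.eval f Q) = Polynomial.eval g R := by
    have h1 : τ (Polynomial.eval f Q)
        = Polynomial.eval₂ τ (τ f) Q := by
      rw [Polynomial.eval, Polynomial.hom_eval₂]
      simp
    have h2 : Polynomial.eval g R = Polynomial.eval₂ τ (τ f) Q := by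
      rw [hR, taylorShift2, Polynomial.eval_map, Polynomial.eval₂_comp]
      congr 1
      simp only [Polynomial.eval₂_add, Polynomial.eval₂_X, Polynomial.eval₂_C]
      rw [hg, hτcomp]
      simp only [Polynomial.C_comp, hτcomp]
      ring
    rw [h1, h2]
  -- X divides g
  have hXg : Polynomial.X ∣ g := by
    rw [Polynomial.X_dvd_iff, Polynomial.coeff_zero_eq_eval_zero]
    simp [hg, Polynomial.eval_comp, hf]
  -- X^m divides eval g R
  have hdvd : Polynomial.X ^ m ∣ Polynomial.eval g R := by
    rw [Polynomial.eval_eq_sum, Polynomial.sum]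
    apply Finset.dvd_sum
    intro e2 _
    by_cases h : m ≤ e2
    · exact dvd_mul_of_dvd_right
        (dvd_trans (pow_dvd_pow _ h) (pow_dvd_pow_of_dvd hXg e2)) _
    · push_neg at h
      have h1 : Polynomial.X ^ (m - e2) ∣ R.coeff e2 := by
        rw [Polynomial.X_pow_dvd_iff]
        intro d hd
        exact hQ d e2 (by omega)
      have h2 : Polynomial.X ^ e2 ∣ g ^ e2 := pow_dvd_pow_of_dvd hXg e2
      have : (Polynomial.X : Polynomial F) ^ m = Polynomial.X ^ (m - e2) * Polynomial.X ^ e2 := by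
        rw [← pow_add]; congr 1; omega
      rw [this]
      exact mul_dvd_mul h1 h2
  rw [← key] at hdvd
  obtain ⟨t, ht⟩ := hdvd
  refine ⟨τ' t, ?_⟩
  have := congrArg τ' ht
  rw [hττ'] at this
  rw [this]
  simp [hτ']
end

section
/- Let F be a field, n, k, m, D ∈ ℕ with k ≥ 2 and m ≥ 1, and let w = {(α_j, β_j)}_{j∈[n]} ⊆ F² with α_1, …, α_n pairwise distinct. Let Q(X,Y) ∈ F[X,Y] be a nonzero polynomial of (1,k−1)-degree at most D that vanishes with multiplicity at least m at every point (α_j, β_j), j ∈ [n]. Let f(X) ∈ F[X] have degree at most k−1 and set t = #{j ∈ [n] : f(α_j) = β_j}. If m·t > D, then Q(X, f(X)) is the zero polynomial; equivalently, (Y − f(X)) divides Q(X,Y) in F[X,Y]. -/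
/-!
Put `g = Q(X, f(X))`. The weighted degree bound and `deg f ≤ k - 1` give `deg g ≤ D`. At an
agreement point `f(α_j) = β_j`, the shift `X ↦ X + α_j` turns `g` into `Q(X + α_j, Y + β_j)`
evaluated at `Y = f(X + α_j) - β_j`, a polynomial without constant term; since every monomial
`X^{e1} Y^{e2}` of the shifted `Q` has `e1 + e2 ≥ m`, this is divisible by `X^m`. Hence
`(X - α_j)^m ∣ g` for all `t` agreement points, and `m t > D ≥ deg g` forces `g = 0`.
-/

open Polynomial

namespace Polynomial

theorem natDegree_eval_le_of_weighted {R : Type*} [Semiring R] {Q : R[X][X]} {f : R[X]}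
    {w D : ℕ} (hQ : ∀ i j : ℕ, (Q.coeff j).coeff i ≠ 0 → i + w * j ≤ D)
    (hf : f.natDegree ≤ w) : (Q.eval f).natDegree ≤ D := by
  rw [eval_eq_sum, sum_def]
  refine natDegree_sum_le_of_forall_le _ _ fun j hj => ?_
  have hlead : (Q.coeff j).coeff (Q.coeff j).natDegree ≠ 0 :=
    leadingCoeff_ne_zero.mpr (mem_support_iff.mp hj)
  calc (Q.coeff j * f ^ j).natDegree
      ≤ (Q.coeff j).natDegree + j * f.natDegree :=
        natDegree_mul_le.trans (Nat.add_le_add_left natDegree_pow_le _)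
    _ ≤ (Q.coeff j).natDegree + w * j := by rw [Nat.mul_comm w]; gcongr
    _ ≤ D := hQ _ _ hlead

theorem X_pow_dvd_eval {R : Type*} [CommSemiring R] {Q : R[X][X]} {m : ℕ}
    (hQ : ∀ e1 e2 : ℕ, e1 + e2 < m → (Q.coeff e2).coeff e1 = 0) {p : R[X]}
    (hp : p.coeff 0 = 0) : X ^ m ∣ Q.eval p := by
  have hXp : X ∣ p := X_dvd_iff.mpr hp
  rw [eval_eq_sum, sum_def]
  refine Finset.dvd_sum fun e2 _ => ?_
  rcases le_or_gt m e2 with h | h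
  · exact dvd_mul_of_dvd_right ((pow_dvd_pow X h).trans (pow_dvd_pow_of_dvd hXp e2)) _
  · have hcoeff : X ^ (m - e2) ∣ Q.coeff e2 :=
      X_pow_dvd_iff.mpr fun e1 he1 => hQ e1 e2 (by omega)
    rw [← Nat.sub_add_cancel h.le, pow_add]
    exact mul_dvd_mul hcoeff (pow_dvd_pow_of_dvd hXp e2)

theorem eval_taylorShift2 {R : Type*} [CommRing R] (Q : R[X][X]) (α β : R) (f : R[X]) :
    (taylorShift2 Q α β).eval (taylor α f - C β) = taylor α (Q.eval f) := by
  have hφ : ∀ p : R[X], eval₂RingHom C (X + C α) p = taylor α p := fun _ => rfl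
  rw [taylorShift2, eval_map, eval₂_comp]
  simp only [eval₂_add, eval₂_X, eval₂_C, hφ, taylor_C, sub_add_cancel]
  rw [← hφ, eval₂_at_apply, hφ]

end Polynomial

theorem VanishesWithMult.X_sub_C_pow_dvd_eval {R : Type*} [CommRing R] {Q : R[X][X]} {α β : R}
    {m : ℕ} (hQ : VanishesWithMult Q α β m) {f : R[X]} (hf : f.eval α = β) :
    (X - C α) ^ m ∣ Q.eval f := by
  rw [← map_dvd_iff (taylorEquiv α)]
  change taylor α ((X - C α) ^ m) ∣ taylor α (Q.eval f)
  rw [taylor_pow, taylor_apply (f := X - C α), sub_comp, X_comp, C_comp, add_sub_cancel_right,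
    ← eval_taylorShift2 Q α β]
  exact X_pow_dvd_eval hQ (by rw [coeff_sub, coeff_C_zero, taylor_coeff_zero, hf, sub_self])

theorem eq_zero_of_forall_X_sub_C_pow_dvd {K ι : Type*} [Field K] {α : ι → K}
    (hα : Function.Injective α) {s : Finset ι} {m : ℕ} {g : K[X]}
    (hdvd : ∀ j ∈ s, (X - C (α j)) ^ m ∣ g) (hdeg : g.natDegree < m * s.card) : g = 0 := by
  by_contra hg
  have hprod : ∏ j ∈ s, (X - C (α j)) ^ m ∣ g :=
    Finset.prod_dvd_of_coprime (fun a _ b _ hab => (pairwise_coprime_X_sub_C hα hab).pow) hdvd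
  have hprod_deg : (∏ j ∈ s, (X - C (α j)) ^ m).natDegree = m * s.card := by
    rw [natDegree_prod _ _ fun j _ => pow_ne_zero _ (X_sub_C_ne_zero _)]
    simp [Nat.mul_comm]
  have := natDegree_le_of_dvd hprod hg
  omega

theorem statement3_general (F : Type*) [Field F] (n k m D : ℕ)
    (α β : Fin n → F) (hα : Function.Injective α)
    (Q : Polynomial (Polynomial F))
    (hQdeg : ∀ i j : ℕ, (Q.coeff j).coeff i ≠ 0 → i + (k - 1) * j ≤ D)
    (hQvanish : ∀ j : Fin n, VanishesWithMult Q (α j) (β j) m)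
    (f : Polynomial F) (hf : f.natDegree ≤ k - 1)
    (t : ℕ) (ht : t = Nat.card {j : Fin n // Polynomial.eval (α j) f = β j})
    (hmt : D < m * t) :
    Polynomial.eval f Q = 0 ∧ (Polynomial.X - Polynomial.C f) ∣ Q := by
  classical
  set agree := Finset.univ.filter fun j => f.eval (α j) = β j
  have ht' : t = agree.card := by rw [ht, Nat.card_eq_fintype_card, Fintype.card_subtype]
  have hdeg : (Q.eval f).natDegree < m * agree.card :=
    (natDegree_eval_le_of_weighted hQdeg hf).trans_lt (ht' ▸ hmt)
  have hzero : Q.eval f = 0 := eq_zero_of_forall_X_sub_C_pow_dvd hα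
    (fun j hj => (hQvanish j).X_sub_C_pow_dvd_eval (Finset.mem_filter.mp hj).2) hdeg
  exact ⟨hzero, dvd_iff_isRoot.mpr hzero⟩

theorem statement3 (F : Type*) [Field F] (n k m D : ℕ) (hk : 2 ≤ k) (hm : 1 ≤ m)
    (α β : Fin n → F) (hα : Function.Injective α)
    (Q : Polynomial (Polynomial F)) (hQ0 : Q ≠ 0)
    (hQdeg : ∀ i j : ℕ, (Q.coeff j).coeff i ≠ 0 → i + (k - 1) * j ≤ D)
    (hQvanish : ∀ j : Fin n, VanishesWithMult Q (α j) (β j) m)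
    (f : Polynomial F) (hf : f.natDegree ≤ k - 1)
    (t : ℕ) (ht : t = Nat.card {j : Fin n // Polynomial.eval (α j) f = β j})
    (hmt : D < m * t) :
    Polynomial.eval f Q = 0 ∧ (Polynomial.X - Polynomial.C f) ∣ Q :=
  statement3_general F n k m D α β hα Q hQdeg hQvanish f hf t ht hmt
end

section
/- Let F be a field, n, k, m, D ∈ ℕ with k ≥ 2 and m ≥ 1, and let (α_j, β_j) ∈ F² for j ∈ [n] be arbitrary points. If the number of pairs (i,j) ∈ ℕ² with i + (k−1)·j ≤ D is strictly greater than n·m·(m+1)/2, then there exists a nonzero polynomial Q(X,Y) ∈ F[X,Y] of (1,k−1)-degree at most D that vanishes with multiplicity at least m at every point (α_j, β_j), j ∈ [n]. -/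
open Polynomial Finset

section CommRing

variable {R : Type*} [CommRing R]

lemma taylorShift2_add (P Q : R[X][X]) (α β : R) :
    taylorShift2 (P + Q) α β = taylorShift2 P α β + taylorShift2 Q α β := by
  simp [taylorShift2, add_comp]

lemma taylorShift2_smul (r : R) (Q : R[X][X]) (α β : R) :
    taylorShift2 (r • Q) α β = r • taylorShift2 Q α β := by
  rw [← algebraMap_smul R[X] r Q, ← algebraMap_smul R[X] r (taylorShift2 Q α β)]
  simp [taylorShift2, smul_comp, Polynomial.map_smul]

lemma card_sigma_range_antidiagonal (m : ℕ) :
    #((range m).sigma fun s => antidiagonal s) = m * (m + 1) / 2 := by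
  have gauss := sum_range_id_mul_two (m + 1)
  rw [sum_range_succ', Nat.add_sub_cancel, add_zero, mul_comm (m + 1)] at gauss
  simp only [card_sigma, Nat.card_antidiagonal]
  omega

/-- The order `(e1, e2)` of a Hasse derivative is indexed by `⟨e1 + e2, (e1, e2)⟩`. -/
noncomputable def multiplicityConditions {ι : Type*} (α β : ι → R) (m : ℕ) :
    R[X][X] →ₗ[R] (ι × (range m).sigma (fun s => antidiagonal s) → R) where
  toFun Q je := ((taylorShift2 Q (α je.1) (β je.1)).coeff je.2.1.2.2).coeff je.2.1.2.1
  map_add' P Q := by ext; simp [taylorShift2_add]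
  map_smul' r Q := by ext; simp [taylorShift2_smul]

lemma vanishesWithMult_of_multiplicityConditions_eq_zero {ι : Type*} {α β : ι → R} {m : ℕ}
    {Q : R[X][X]} (hQ : multiplicityConditions α β m Q = 0) (j : ι) :
    VanishesWithMult Q (α j) (β j) m := fun e1 e2 he =>
  congr_fun hQ (j, ⟨⟨e1 + e2, (e1, e2)⟩, by simpa using he⟩)

noncomputable def ofCoeffsOn (S : Finset (ℕ × ℕ)) : (S → R) →ₗ[R] R[X][X] where
  toFun c := ∑ p : S, monomial p.1.2 (monomial p.1.1 (c p))
  map_add' c d := by simp [sum_add_distrib]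
  map_smul' r c := by simp [smul_sum, smul_monomial]

lemma coeff_coeff_ofCoeffsOn (S : Finset (ℕ × ℕ)) (c : S → R) (i j : ℕ) :
    ((ofCoeffsOn S c).coeff j).coeff i = if h : (i, j) ∈ S then c ⟨(i, j), h⟩ else 0 := by
  have term (p : S) : ((monomial p.1.2 (monomial p.1.1 (c p))).coeff j).coeff i =
      if p.1 = (i, j) then c p else 0 := by
    rcases p with ⟨⟨a, b⟩, hp⟩
    by_cases ha : a = i <;> by_cases hb : b = j <;> simp [coeff_monomial, ha, hb]
  change ((∑ p : S, monomial p.1.2 (monomial p.1.1 (c p))).coeff j).coeff i = _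
  simp only [finsetSum_coeff, term]
  split_ifs with h
  · rw [Fintype.sum_eq_single ⟨(i, j), h⟩ fun p hp => if_neg fun hij => hp (Subtype.ext hij)]
    simp
  · exact sum_eq_zero fun p _ => if_neg fun hij : p.1 = (i, j) => h (hij ▸ p.2)

lemma mem_of_coeff_coeff_ofCoeffsOn_ne_zero {S : Finset (ℕ × ℕ)} {c : S → R} {i j : ℕ}
    (h : ((ofCoeffsOn S c).coeff j).coeff i ≠ 0) : (i, j) ∈ S := by
  contrapose! h
  simp [coeff_coeff_ofCoeffsOn, h]

lemma ofCoeffsOn_injective (S : Finset (ℕ × ℕ)) : Function.Injective (ofCoeffsOn (R := R) S) := by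
  intro c d hcd
  funext p
  simpa [coeff_coeff_ofCoeffsOn] using
    congr_arg (fun Q : R[X][X] => (Q.coeff p.1.2).coeff p.1.1) hcd

end CommRing

theorem exists_ne_zero_support_subset_vanishesWithMult {F ι : Type*} [Field F] [Fintype ι]
    (α β : ι → F) (m : ℕ) (S : Finset (ℕ × ℕ))
    (hS : Fintype.card ι * (m * (m + 1) / 2) < #S) :
    ∃ Q : F[X][X], Q ≠ 0 ∧ (∀ i j, (Q.coeff j).coeff i ≠ 0 → (i, j) ∈ S) ∧
      ∀ j, VanishesWithMult Q (α j) (β j) m := by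
  have hker : LinearMap.ker ((multiplicityConditions α β m).comp (ofCoeffsOn S)) ≠ ⊥ :=
    LinearMap.ker_ne_bot_of_finrank_lt (by
      rwa [Module.finrank_fintype_fun_eq_card, Module.finrank_fintype_fun_eq_card,
        Fintype.card_prod, Fintype.card_coe, Fintype.card_coe, card_sigma_range_antidiagonal])
  obtain ⟨c, hc, hc0⟩ := Submodule.exists_mem_ne_zero_of_ne_bot hker
  exact ⟨ofCoeffsOn S c, (map_ne_zero_iff _ (ofCoeffsOn_injective S)).mpr hc0,
    fun _ _ => mem_of_coeff_coeff_ofCoeffsOn_ne_zero,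
    vanishesWithMult_of_multiplicityConditions_eq_zero hc⟩

theorem statement4_general (F : Type*) [Field F] (n k m D : ℕ)
    (α β : Fin n → F)
    (hcount : n * m * (m + 1) / 2 <
      (((Finset.range (D + 1)) ×ˢ (Finset.range (D + 1))).filter
        (fun p : ℕ × ℕ => p.1 + (k - 1) * p.2 ≤ D)).card) :
    ∃ Q : Polynomial (Polynomial F), Q ≠ 0 ∧
      (∀ i j : ℕ, (Q.coeff j).coeff i ≠ 0 → i + (k - 1) * j ≤ D) ∧
      (∀ j : Fin n, VanishesWithMult Q (α j) (β j) m) := by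
  rw [mul_assoc, Nat.mul_div_assoc n (Nat.even_mul_succ_self m).two_dvd,
    ← Fintype.card_fin n] at hcount
  obtain ⟨Q, hQ, hsupp, hvan⟩ := exists_ne_zero_support_subset_vanishesWithMult α β m _ hcount
  exact ⟨Q, hQ, fun i j hij => (mem_filter.mp (hsupp i j hij)).2, hvan⟩

theorem statement4 (F : Type*) [Field F] (n k m D : ℕ) (hk : 2 ≤ k) (hm : 1 ≤ m)
    (α β : Fin n → F)
    (hcount : n * m * (m + 1) / 2 <
      (((Finset.range (D + 1)) ×ˢ (Finset.range (D + 1))).filter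
        (fun p : ℕ × ℕ => p.1 + (k - 1) * p.2 ≤ D)).card) :
    ∃ Q : Polynomial (Polynomial F), Q ≠ 0 ∧
      (∀ i j : ℕ, (Q.coeff j).coeff i ≠ 0 → i + (k - 1) * j ≤ D) ∧
      (∀ j : Fin n, VanishesWithMult Q (α j) (β j) m) :=
  statement4_general F n k m D α β hcount
end

section
/- (Hensel lifting, existence.) Let F be a field, α ∈ F, m ≥ 1 an integer, and P, g, h, a, b ∈ F[X,Y] such that (X−α)^m divides P − g·h and (X−α)^m divides a·g + b·h − 1. Then there exist polynomials g', h', a', b' ∈ F[X,Y] such that (X−α)^{2m} divides P − g'·h', (X−α)^m divides g' − g, (X−α)^m divides h' − h, and (X−α)^{2m} divides a'·g' + b'·h' − 1. -/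
/-!
STATEMENT 6 (Hensel lifting, existence): Let F be a field, α ∈ F, m ≥ 1 an integer, and
P, g, h, a, b ∈ F[X,Y] such that (X−α)^m divides P − g·h and (X−α)^m divides a·g + b·h − 1.
Then there exist polynomials g', h', a', b' ∈ F[X,Y] such that (X−α)^{2m} divides P − g'·h',
(X−α)^m divides g' − g, (X−α)^m divides h' − h, and (X−α)^{2m} divides a'·g' + b'·h' − 1.

Bivariate polynomials in F[X,Y] are represented as `Polynomial (Polynomial F)` with outer
variable Y and inner variable X; the polynomial (X−α) ∈ F[X,Y] is
`Polynomial.C (Polynomial.X - Polynomial.C α)`.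
-/

theorem statement6 (F : Type*) [Field F] (α : F) (m : ℕ) (hm : 1 ≤ m)
    (P g h a b : Polynomial (Polynomial F))
    (hfac : (Polynomial.C (Polynomial.X - Polynomial.C α)) ^ m ∣ (P - g * h))
    (hbez : (Polynomial.C (Polynomial.X - Polynomial.C α)) ^ m ∣ (a * g + b * h - 1)) :
    ∃ g' h' a' b' : Polynomial (Polynomial F),
      (Polynomial.C (Polynomial.X - Polynomial.C α)) ^ (2 * m) ∣ (P - g' * h') ∧
      (Polynomial.C (Polynomial.X - Polynomial.C α)) ^ m ∣ (g' - g) ∧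
      (Polynomial.C (Polynomial.X - Polynomial.C α)) ^ m ∣ (h' - h) ∧
      (Polynomial.C (Polynomial.X - Polynomial.C α)) ^ (2 * m) ∣ (a' * g' + b' * h' - 1) := by
  obtain ⟨e, he⟩ := hfac
  obtain ⟨d, hd⟩ := hbez
  set t : Polynomial (Polynomial F) := Polynomial.C (Polynomial.X - Polynomial.C α) with htdef
  have h2 : t ^ (2 * m) = t ^ m * t ^ m := by rw [two_mul, pow_add]
  -- constructions
  refine ⟨g + b * (P - g * h), h + a * (P - g * h),
    a * (1 - (a * (g + b * (P - g * h)) + b * (h + a * (P - g * h)) - 1)),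
    b * (1 - (a * (g + b * (P - g * h)) + b * (h + a * (P - g * h)) - 1)),
    ?_, ⟨b * e, by linear_combination b * he⟩, ⟨a * e, by linear_combination a * he⟩, ?_⟩
  · rw [h2]
    exact ⟨-(d * e + a * b * e * e), by
      linear_combination (-(P - g * h)) * hd +
        (-(t ^ m * d) - a * b * ((P - g * h) + t ^ m * e)) * he⟩
  · rw [h2]
    have hs : a * (g + b * (P - g * h)) + b * (h + a * (P - g * h)) - 1
        = t ^ m * (d + 2 * a * b * e) := by
      linear_combination hd + 2 * a * b * he
    exact ⟨-((d + 2 * a * b * e) * (d + 2 * a * b * e)), by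
      linear_combination (-(a * (g + b * (P - g * h)) + b * (h + a * (P - g * h)) - 1
        + t ^ m * (d + 2 * a * b * e))) * hs⟩
end

section
/- (Hensel lifting, uniqueness.) Let F be a field, α ∈ F, m ≥ 1 an integer, and P, g, h, a, b ∈ F[X,Y] such that (X−α)^m divides P − g·h and (X−α)^m divides a·g + b·h − 1. Suppose g', h' ∈ F[X,Y] satisfy (X−α)^{2m} | P − g'·h', (X−α)^m | g' − g, and (X−α)^m | h' − h, and suppose g*, h* ∈ F[X,Y] also satisfy (X−α)^{2m} | P − g*·h*, (X−α)^m | g* − g, and (X−α)^m | h* − h. Then there exists u ∈ F[X,Y] with (X−α)^m | u such that (X−α)^{2m} divides g* − g'·(1+u) and (X−α)^{2m} divides h* − h'·(1−u). -/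
/-!
Write `q = (X - α)^m`, `δg = g* - g'` and `δh = h* - h'`. Both differences are divisible by `q`,
so `δg δh ≡ 0` and hence `g' δh + h' δg ≡ g* h* - g' h' ≡ 0 (mod q²)`. The Bezout relation
survives the passage from `g, h` to `g', h'` modulo `q`, and with `u = a δg - b δh` one has
`g* - g'(1 + u) = -δg (a g' + b h' - 1) + b (g' δh + h' δg)`, and symmetrically for `h*`;
both terms on the right are divisible by `q²`.
-/

section HenselUniqueness

variable {R : Type*} [CommRing R] {q : R}

theorem dvd_sub_of_dvd_sub_of_dvd_sub {x y z : R} (hx : q ∣ x - z) (hy : q ∣ y - z) :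
    q ∣ x - y := by
  simpa using dvd_sub hx hy

theorem dvd_bezout_of_dvd_sub {a b g h g' h' : R} (hbez : q ∣ a * g + b * h - 1)
    (hg : q ∣ g' - g) (hh : q ∣ h' - h) : q ∣ a * g' + b * h' - 1 := by
  have hsplit : a * g' + b * h' - 1 = (a * g + b * h - 1) + a * (g' - g) + b * (h' - h) := by
    ring
  rw [hsplit]
  exact dvd_add (dvd_add hbez (hg.mul_left a)) (hh.mul_left b)

theorem sq_dvd_cross_term {g h g' h' : R} (hg : q ∣ g' - g) (hh : q ∣ h' - h)
    (hprod : q ^ 2 ∣ g' * h' - g * h) : q ^ 2 ∣ g * (h' - h) + h * (g' - g) := by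
  have hsplit : g * (h' - h) + h * (g' - g) = (g' * h' - g * h) - (g' - g) * (h' - h) := by
    ring
  rw [hsplit]
  exact dvd_sub hprod (sq q ▸ mul_dvd_mul hg hh)

theorem exists_sq_dvd_sub_mul_one_add {a b g h g' h' : R} (hbez : q ∣ a * g + b * h - 1)
    (hg : q ∣ g' - g) (hh : q ∣ h' - h) (hprod : q ^ 2 ∣ g' * h' - g * h) :
    ∃ u : R, q ∣ u ∧ q ^ 2 ∣ g' - g * (1 + u) ∧ q ^ 2 ∣ h' - h * (1 - u) := by
  have hcross := sq_dvd_cross_term hg hh hprod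
  refine ⟨a * (g' - g) - b * (h' - h), dvd_sub (hg.mul_left a) (hh.mul_left b), ?_, ?_⟩
  · have hsplit : g' - g * (1 + (a * (g' - g) - b * (h' - h)))
        = -((g' - g) * (a * g + b * h - 1)) + b * (g * (h' - h) + h * (g' - g)) := by
      ring
    rw [hsplit]
    exact dvd_add (dvd_neg.mpr (sq q ▸ mul_dvd_mul hg hbez)) (hcross.mul_left b)
  · have hsplit : h' - h * (1 - (a * (g' - g) - b * (h' - h)))
        = -((h' - h) * (a * g + b * h - 1)) + a * (g * (h' - h) + h * (g' - g)) := by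
      ring
    rw [hsplit]
    exact dvd_add (dvd_neg.mpr (sq q ▸ mul_dvd_mul hh hbez)) (hcross.mul_left a)

end HenselUniqueness

theorem statement7_general (F : Type*) [Field F] (α : F) (m : ℕ)
    (P g h a b g' h' gs hs : Polynomial (Polynomial F))
    (hbez : (Polynomial.C (Polynomial.X - Polynomial.C α)) ^ m ∣ (a * g + b * h - 1))
    (hfac' : (Polynomial.C (Polynomial.X - Polynomial.C α)) ^ (2 * m) ∣ (P - g' * h'))
    (hg' : (Polynomial.C (Polynomial.X - Polynomial.C α)) ^ m ∣ (g' - g))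
    (hh' : (Polynomial.C (Polynomial.X - Polynomial.C α)) ^ m ∣ (h' - h))
    (hfacs : (Polynomial.C (Polynomial.X - Polynomial.C α)) ^ (2 * m) ∣ (P - gs * hs))
    (hgs : (Polynomial.C (Polynomial.X - Polynomial.C α)) ^ m ∣ (gs - g))
    (hhs : (Polynomial.C (Polynomial.X - Polynomial.C α)) ^ m ∣ (hs - h)) :
    ∃ u : Polynomial (Polynomial F),
      (Polynomial.C (Polynomial.X - Polynomial.C α)) ^ m ∣ u ∧
      (Polynomial.C (Polynomial.X - Polynomial.C α)) ^ (2 * m) ∣ (gs - g' * (1 + u)) ∧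
      (Polynomial.C (Polynomial.X - Polynomial.C α)) ^ (2 * m) ∣ (hs - h' * (1 - u)) := by
  rw [mul_comm 2 m, pow_mul] at hfac' hfacs ⊢
  exact exists_sq_dvd_sub_mul_one_add (dvd_bezout_of_dvd_sub hbez hg' hh')
    (dvd_sub_of_dvd_sub_of_dvd_sub hgs hg') (dvd_sub_of_dvd_sub_of_dvd_sub hhs hh')
    (by simpa using dvd_sub hfac' hfacs)

theorem statement7 (F : Type*) [Field F] (α : F) (m : ℕ) (hm : 1 ≤ m)
    (P g h a b g' h' gs hs : Polynomial (Polynomial F))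
    (hfac : (Polynomial.C (Polynomial.X - Polynomial.C α)) ^ m ∣ (P - g * h))
    (hbez : (Polynomial.C (Polynomial.X - Polynomial.C α)) ^ m ∣ (a * g + b * h - 1))
    (hfac' : (Polynomial.C (Polynomial.X - Polynomial.C α)) ^ (2 * m) ∣ (P - g' * h'))
    (hg' : (Polynomial.C (Polynomial.X - Polynomial.C α)) ^ m ∣ (g' - g))
    (hh' : (Polynomial.C (Polynomial.X - Polynomial.C α)) ^ m ∣ (h' - h))
    (hfacs : (Polynomial.C (Polynomial.X - Polynomial.C α)) ^ (2 * m) ∣ (P - gs * hs))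
    (hgs : (Polynomial.C (Polynomial.X - Polynomial.C α)) ^ m ∣ (gs - g))
    (hhs : (Polynomial.C (Polynomial.X - Polynomial.C α)) ^ m ∣ (hs - h)) :
    ∃ u : Polynomial (Polynomial F),
      (Polynomial.C (Polynomial.X - Polynomial.C α)) ^ m ∣ u ∧
      (Polynomial.C (Polynomial.X - Polynomial.C α)) ^ (2 * m) ∣ (gs - g' * (1 + u)) ∧
      (Polynomial.C (Polynomial.X - Polynomial.C α)) ^ (2 * m) ∣ (hs - h' * (1 - u)) :=
  statement7_general F α m P g h a b g' h' gs hs hbez hfac' hg' hh' hfacs hgs hhs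
end

section
/- (Degree bounds for iterative Hensel lifting.) Let F be a field, d ≥ 1 an integer, and let f ∈ F[X,Y] have total degree at most d. Let g_0, h_0, a_0, b_0 ∈ F[Y] ⊆ F[X,Y] each have total degree at most d. Define recursively, for every i ≥ 0: m_i := f − g_i·h_i; g_{i+1} := g_i + b_i·m_i; h_{i+1} := h_i + a_i·m_i; q_{i+1} := a_i·g_{i+1} + b_i·h_{i+1} − 1; a_{i+1} := a_i − a_i·q_{i+1}; b_{i+1} := b_i − b_i·q_{i+1}. Then for every i ≥ 0, the total degrees of g_i, h_i, a_i and b_i are each at most d·5^i. -/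
/-!
Total degree is subadditive under products and does not grow under sums, so one step of the
iteration multiplies a common degree bound `D` (which also bounds `f`) by at most five:
`m` has degree `≤ 2D`, the lifted `g, h` have degree `≤ 3D`, the error `q` has degree `≤ 4D`,
and the corrected `a, b` have degree `≤ 5D`. Induction on `i` gives the bound `d·5^i`.
-/

/- `F[X,Y]` is `Polynomial (Polynomial F)` with outer variable `Y`, so the coefficient of
`X^i·Y^j` in `Q` is `(Q.coeff j).coeff i`, and `F[Y] ⊆ F[X,Y]` is the image of `map C`. -/

/-- Every monomial `X^i·Y^j` of `Q` with a nonzero coefficient satisfies `i + j ≤ n`. -/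
def TotalDegLE {F : Type*} [CommRing F] (Q : Polynomial (Polynomial F)) (n : ℕ) : Prop :=
  ∀ i j : ℕ, (Q.coeff j).coeff i ≠ 0 → i + j ≤ n

open Polynomial

namespace TotalDegLE

variable {R : Type*} [CommRing R] {P Q : R[X][X]} {m n : ℕ}

theorem mono (hQ : TotalDegLE Q m) (hmn : m ≤ n) : TotalDegLE Q n :=
  fun i j hij => (hQ i j hij).trans hmn

theorem add (hP : TotalDegLE P n) (hQ : TotalDegLE Q n) : TotalDegLE (P + Q) n := by
  intro i j hij
  rw [coeff_add, coeff_add] at hij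
  by_cases hPij : (P.coeff j).coeff i = 0
  · exact hQ i j fun hQij => hij (by rw [hPij, hQij, add_zero])
  · exact hP i j hPij

theorem neg (hQ : TotalDegLE Q n) : TotalDegLE (-Q) n := fun i j hij =>
  hQ i j (by simpa only [coeff_neg, ne_eq, neg_eq_zero] using hij)

theorem sub (hP : TotalDegLE P n) (hQ : TotalDegLE Q n) : TotalDegLE (P - Q) n :=
  sub_eq_add_neg P Q ▸ hP.add hQ.neg

theorem mul (hP : TotalDegLE P m) (hQ : TotalDegLE Q n) : TotalDegLE (P * Q) (m + n) := by
  intro i j hij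
  rw [coeff_mul, finsetSum_coeff] at hij
  obtain ⟨⟨j₁, j₂⟩, hj, hj₁₂⟩ := Finset.exists_ne_zero_of_sum_ne_zero hij
  rw [coeff_mul] at hj₁₂
  obtain ⟨⟨i₁, i₂⟩, hi, hi₁₂⟩ := Finset.exists_ne_zero_of_sum_ne_zero hj₁₂
  have hP₁ := hP i₁ j₁ (left_ne_zero_of_mul hi₁₂)
  have hQ₂ := hQ i₂ j₂ (right_ne_zero_of_mul hi₁₂)
  rw [Finset.HasAntidiagonal.mem_antidiagonal] at hj hi
  omega

end TotalDegLE

section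

variable {R : Type*} [CommRing R]

theorem totalDegLE_one (n : ℕ) : TotalDegLE (1 : R[X][X]) n := by
  intro i j hij
  rw [coeff_one] at hij
  split_ifs at hij with hj
  · rw [coeff_one] at hij
    split_ifs at hij with hi
    · omega
    · exact absurd rfl hij
  · exact absurd (coeff_zero i) hij

theorem totalDegLE_map_C {p : R[X]} {n : ℕ} (hp : p.natDegree ≤ n) :
    TotalDegLE (p.map C) n := by
  intro i j hij
  rw [coeff_map, coeff_C] at hij
  split_ifs at hij with hi
  · rw [hi, zero_add]
    exact (le_natDegree_of_ne_zero hij).trans hp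
  · exact absurd rfl hij

theorem totalDegLE_henselStep {f g h a b g' h' a' b' : R[X][X]} {D : ℕ}
    (hf : TotalDegLE f D) (hg : TotalDegLE g D) (hh : TotalDegLE h D)
    (ha : TotalDegLE a D) (hb : TotalDegLE b D)
    (hg' : g' = g + b * (f - g * h)) (hh' : h' = h + a * (f - g * h))
    (ha' : a' = a - a * (a * g' + b * h' - 1)) (hb' : b' = b - b * (a * g' + b * h' - 1)) :
    TotalDegLE g' (5 * D) ∧ TotalDegLE h' (5 * D) ∧
      TotalDegLE a' (5 * D) ∧ TotalDegLE b' (5 * D) := by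
  have hm : TotalDegLE (f - g * h) (2 * D) :=
    (hf.mono (by omega)).sub ((hg.mul hh).mono (by omega))
  have hg₃ : TotalDegLE g' (3 * D) :=
    hg' ▸ (hg.mono (by omega)).add ((hb.mul hm).mono (by omega))
  have hh₃ : TotalDegLE h' (3 * D) :=
    hh' ▸ (hh.mono (by omega)).add ((ha.mul hm).mono (by omega))
  have hq : TotalDegLE (a * g' + b * h' - 1) (4 * D) :=
    (((ha.mul hg₃).mono (by omega)).add ((hb.mul hh₃).mono (by omega))).sub (totalDegLE_one _)
  refine ⟨hg₃.mono (by omega), hh₃.mono (by omega), ?_, ?_⟩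
  · exact ha' ▸ (ha.mono (by omega)).sub ((ha.mul hq).mono (by omega))
  · exact hb' ▸ (hb.mono (by omega)).sub ((hb.mul hq).mono (by omega))

end

theorem statement8_general (F : Type*) [Field F] (d : ℕ)
    (f : Polynomial (Polynomial F)) (hf : TotalDegLE f d)
    (g h a b : ℕ → Polynomial (Polynomial F))
    (pg ph pa pb : Polynomial F)
    (hg0 : g 0 = pg.map Polynomial.C) (hh0 : h 0 = ph.map Polynomial.C)
    (ha0 : a 0 = pa.map Polynomial.C) (hb0 : b 0 = pb.map Polynomial.C)
    (hdg0 : pg.natDegree ≤ d) (hdh0 : ph.natDegree ≤ d)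
    (hda0 : pa.natDegree ≤ d) (hdb0 : pb.natDegree ≤ d)
    (hgrec : ∀ i, g (i + 1) = g i + b i * (f - g i * h i))
    (hhrec : ∀ i, h (i + 1) = h i + a i * (f - g i * h i))
    (harec : ∀ i, a (i + 1) = a i - a i * (a i * g (i + 1) + b i * h (i + 1) - 1))
    (hbrec : ∀ i, b (i + 1) = b i - b i * (a i * g (i + 1) + b i * h (i + 1) - 1)) :
    ∀ i : ℕ, TotalDegLE (g i) (d * 5 ^ i) ∧ TotalDegLE (h i) (d * 5 ^ i) ∧
      TotalDegLE (a i) (d * 5 ^ i) ∧ TotalDegLE (b i) (d * 5 ^ i) := by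
  intro i
  induction i with
  | zero =>
    rw [pow_zero, mul_one, hg0, hh0, ha0, hb0]
    exact ⟨totalDegLE_map_C hdg0, totalDegLE_map_C hdh0, totalDegLE_map_C hda0,
      totalDegLE_map_C hdb0⟩
  | succ i ih =>
    obtain ⟨hg, hh, ha, hb⟩ := ih
    have hfi : TotalDegLE f (d * 5 ^ i) := hf.mono (Nat.le_mul_of_pos_right d (by positivity))
    rw [pow_succ, ← mul_assoc, mul_comm _ 5]
    exact totalDegLE_henselStep hfi hg hh ha hb (hgrec i) (hhrec i) (harec i) (hbrec i)

theorem statement8 (F : Type*) [Field F] (d : ℕ) (hd : 1 ≤ d)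
    (f : Polynomial (Polynomial F)) (hf : TotalDegLE f d)
    (g h a b : ℕ → Polynomial (Polynomial F))
    (pg ph pa pb : Polynomial F)
    (hg0 : g 0 = pg.map Polynomial.C) (hh0 : h 0 = ph.map Polynomial.C)
    (ha0 : a 0 = pa.map Polynomial.C) (hb0 : b 0 = pb.map Polynomial.C)
    (hdg0 : pg.natDegree ≤ d) (hdh0 : ph.natDegree ≤ d)
    (hda0 : pa.natDegree ≤ d) (hdb0 : pb.natDegree ≤ d)
    (hgrec : ∀ i, g (i + 1) = g i + b i * (f - g i * h i))
    (hhrec : ∀ i, h (i + 1) = h i + a i * (f - g i * h i))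
    (harec : ∀ i, a (i + 1) = a i - a i * (a i * g (i + 1) + b i * h (i + 1) - 1))
    (hbrec : ∀ i, b (i + 1) = b i - b i * (a i * g (i + 1) + b i * h (i + 1) - 1)) :
    ∀ i : ℕ, TotalDegLE (g i) (d * 5 ^ i) ∧ TotalDegLE (h i) (d * 5 ^ i) ∧
      TotalDegLE (a i) (d * 5 ^ i) ∧ TotalDegLE (b i) (d * 5 ^ i) :=
  statement8_general F d f hf g h a b pg ph pa pb hg0 hh0 ha0 hb0 hdg0 hdh0 hda0 hdb0 hgrec hhrec
    harec hbrec
end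

section
/- Let F be a field, g(X,Y) ∈ F[X,Y], (α,β) ∈ F², and f(X) ∈ F[X] such that (Y − f(X)) divides g(X,Y) in F[X,Y]. Suppose g is stable at (α,β), that is: the univariate polynomial g(α,Y) ∈ F[Y] has degree at least 1, and either g(α,Y) = γ·(Y−β)^r for some γ ∈ F \ {0} and some integer r ≥ 1, or g(α,β) ≠ 0. Then g(α,β) = 0 if and only if f(α) = β. -/
/-!
STATEMENT 15: Let F be a field, g(X,Y) ∈ F[X,Y], (α,β) ∈ F², and f(X) ∈ F[X] such that
(Y − f(X)) divides g(X,Y) in F[X,Y]. Suppose g is stable at (α,β), that is: the univariate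
polynomial g(α,Y) ∈ F[Y] has degree at least 1, and either g(α,Y) = γ·(Y−β)^r for some
γ ∈ F \ {0} and some integer r ≥ 1, or g(α,β) ≠ 0. Then g(α,β) = 0 if and only if f(α) = β.

Bivariate polynomials in F[X,Y] are represented as `Polynomial (Polynomial F)` with outer
variable Y and inner variable X; g(α,Y) is `g.map (Polynomial.evalRingHom α)` and g(α,β) is
its evaluation at β.  The factor (Y − f(X)) is `Polynomial.X - Polynomial.C f`.
-/

theorem statement15 (F : Type*) [Field F] (g : Polynomial (Polynomial F)) (α β : F)
    (f : Polynomial F) (hdvd : (Polynomial.X - Polynomial.C f) ∣ g)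
    (hdeg : 1 ≤ (g.map (Polynomial.evalRingHom α)).natDegree)
    (hstable :
      (∃ γ : F, γ ≠ 0 ∧ ∃ r : ℕ, 1 ≤ r ∧
        g.map (Polynomial.evalRingHom α) =
          Polynomial.C γ * (Polynomial.X - Polynomial.C β) ^ r) ∨
      Polynomial.eval β (g.map (Polynomial.evalRingHom α)) ≠ 0) :
    Polynomial.eval β (g.map (Polynomial.evalRingHom α)) = 0 ↔ Polynomial.eval α f = β := by
  obtain ⟨h, rfl⟩ := hdvd
  have hmap : ((Polynomial.X - Polynomial.C f) * h).map (Polynomial.evalRingHom α) =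
      (Polynomial.X - Polynomial.C (f.eval α)) * h.map (Polynomial.evalRingHom α) := by
    simp [Polynomial.map_mul]
  constructor
  · intro h0
    rcases hstable with ⟨γ, hγ, r, hr, heq⟩ | hne
    · have hroot : Polynomial.eval (f.eval α)
          (((Polynomial.X - Polynomial.C f) * h).map (Polynomial.evalRingHom α)) = 0 := by
        rw [hmap]; simp
      rw [heq] at hroot
      simp at hroot
      rcases hroot with hroot | hroot
      · exact absurd hroot hγ
      · exact sub_eq_zero.mp hroot.1
    · exact absurd h0 hne
  · intro hfb
    rw [hmap]
    simp [hfb]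
end

section
/- Let F be a field, α ∈ F, and N ≥ 1 an integer. Let P, V, U, G, H ∈ F[X,Y] satisfy: the Y-degrees of P and V are each at least 1; the univariate polynomial H(α,Y) ∈ F[Y] has degree at least 1; (X−α)^N divides P − G·H; (X−α)^N divides V − U·H; and N > deg_Y(V)·deg_X(P) + deg_Y(P)·deg_X(V). Then P and V have a common divisor in F[X,Y] of Y-degree at least one. -/
/-!
Bivariate polynomials in F[X,Y] are represented as `Polynomial (Polynomial F)` with outer
variable Y and inner variable X; the Y-degree is `Polynomial.natDegree` (of the outer
polynomial), and the X-degree is the maximum of the degrees of the coefficients (defined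
below).  H(α,Y) is `H.map (Polynomial.evalRingHom α)`, and (X−α) as an element of F[X,Y] is
`Polynomial.C (Polynomial.X - Polynomial.C α)`.

The resultant `Res_Y(P, V) ∈ F[X]` has the form `p P + q V`, and as the determinant of the
Sylvester matrix its X-degree is at most `deg_Y V · deg_X P + deg_Y P · deg_X V < N`. The two
congruences give `Res ≡ (p G + q U) H mod (X - α)^N`; as `H(α, Y)` is not constant this forces
`(X - α)^N ∣ Res`, so `Res = 0`. Then `P` and `V` are not coprime over `F(X)`, and Gauss's lemma
lifts a common factor of positive Y-degree back to `F[X][Y]`.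
-/

/-- The X-degree of a bivariate polynomial in `F[X,Y]` (represented with Y as the outer
variable): the maximum over the monomials Y^j of the degree (in X) of their coefficients. -/
noncomputable def degX {F : Type*} [CommRing F] (Q : Polynomial (Polynomial F)) : ℕ :=
  Q.support.sup fun j => (Q.coeff j).natDegree

open Polynomial

theorem natDegree_coeff_le_degX {R : Type*} [CommRing R] (Q : R[X][X]) (j : ℕ) :
    (Q.coeff j).natDegree ≤ degX Q := by
  by_cases h : j ∈ Q.support
  · exact Finset.le_sup (f := fun j => (Q.coeff j).natDegree) h
  · simp [notMem_support_iff.mp h]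

theorem Matrix.natDegree_det_le_sum {ι R : Type*} [Fintype ι] [DecidableEq ι] [CommRing R]
    (M : Matrix ι ι R[X]) (d : ι → ℕ) (hM : ∀ i j, (M i j).natDegree ≤ d j) :
    M.det.natDegree ≤ ∑ j, d j := by
  rw [Matrix.det_apply]
  refine natDegree_sum_le_of_forall_le _ _ fun σ _ => ?_
  calc (Equiv.Perm.sign σ • ∏ j, M (σ j) j).natDegree
      ≤ (∏ j, M (σ j) j).natDegree := by
        rw [Units.smul_def]; exact natDegree_smul_le _ _
    _ ≤ ∑ j, (M (σ j) j).natDegree := natDegree_prod_le _ _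
    _ ≤ ∑ j, d j := Finset.sum_le_sum fun j _ => hM _ _

theorem natDegree_resultant_le {R : Type*} [CommRing R] (f g : R[X][X]) (m n : ℕ) :
    (resultant f g m n).natDegree ≤ n * degX f + m * degX g := by
  classical
  calc (resultant f g m n).natDegree
      ≤ ∑ j : Fin (m + n), Fin.addCases (fun _ => degX g) (fun _ => degX f) j := by
        refine Matrix.natDegree_det_le_sum _ _ fun i j => ?_
        induction j using Fin.addCases <;>
          simp only [sylvester, Matrix.of_apply, Fin.addCases_left, Fin.addCases_right] <;>
          split_ifs <;> simp [natDegree_coeff_le_degX]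
    _ = n * degX f + m * degX g := by simp [Fin.sum_univ_add, add_comm]

theorem eq_zero_of_C_eq_mul_of_natDegree_pos {S : Type*} [CommRing S] [IsDomain S] {c : S}
    {A B : S[X]} (hB : 0 < B.natDegree) (h : C c = A * B) : A = 0 := by
  by_contra hA
  have := natDegree_mul hA (ne_zero_of_natDegree_gt hB)
  rw [← h, natDegree_C] at this
  omega

theorem C_X_sub_C_dvd_of_map_evalRingHom_eq_zero {S : Type*} [CommRing S] {α : S} {A : S[X][X]}
    (h : A.map (evalRingHom α) = 0) : C (X - C α) ∣ A := by
  rw [C_dvd_iff_dvd_coeff]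
  intro i
  simpa [dvd_iff_isRoot] using congr_arg (coeff · i) h

/-- Reducing modulo `X - α` kills `C r` and `Co` at once, since `H(α, Y)` is not constant;
dividing by `X - α` and inducting gives the full power. -/
theorem X_sub_C_pow_dvd_of_C_eq_mul_add {S : Type*} [CommRing S] [IsDomain S] {α : S}
    {H : S[X][X]} (hH : 1 ≤ (H.map (evalRingHom α)).natDegree) {N : ℕ} {r : S[X]}
    {Co K : S[X][X]} (hr : C r = Co * H + C (X - C α) ^ N * K) : (X - C α) ^ N ∣ r := by
  induction N generalizing r Co K with
  | zero => simp
  | succ N ih =>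
    have hmap : C (r.eval α) = Co.map (evalRingHom α) * H.map (evalRingHom α) := by
      simpa using congr_arg (map (evalRingHom α)) hr
    have hCo := eq_zero_of_C_eq_mul_of_natDegree_pos hH hmap
    obtain ⟨Co₁, rfl⟩ := C_X_sub_C_dvd_of_map_evalRingHom_eq_zero hCo
    obtain ⟨r₁, rfl⟩ : X - C α ∣ r := by
      rw [dvd_iff_isRoot, IsRoot, ← C_eq_zero, hmap, hCo, zero_mul]
    have hr₁ : C r₁ = Co₁ * H + C (X - C α) ^ N * K := by
      refine mul_left_cancel₀ (C_ne_zero.mpr (X_sub_C_ne_zero α)) ?_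
      rw [← C_mul, hr]
      ring
    rw [pow_succ']
    exact mul_dvd_mul_left _ (ih hr₁)

theorem exists_isPrimitive_map_associated {R K : Type*} [CommRing R] [IsDomain R]
    [NormalizedGCDMonoid R] [Field K] [Algebra R K] [IsFractionRing R K] {p : K[X]} (hp : p ≠ 0) :
    ∃ w : R[X], w.IsPrimitive ∧ Associated (w.map (algebraMap R K)) p := by
  have hinj := IsFractionRing.injective R K
  obtain ⟨b, hb, hbp⟩ := IsLocalization.integerNormalization_spec (nonZeroDivisors R) p
  set q := IsLocalization.integerNormalization (nonZeroDivisors R) p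
  have hb' : algebraMap R K b ≠ 0 :=
    (map_ne_zero_iff _ hinj).mpr (nonZeroDivisors.ne_zero hb)
  have hc' : algebraMap R K q.content ≠ 0 := by
    rw [Ne, map_eq_zero_iff _ hinj, content_eq_zero_iff,
      IsFractionRing.integerNormalization_eq_zero_iff]
    exact hp
  refine ⟨q.primPart, isPrimitive_primPart q, ?_⟩
  have hsplit : C (algebraMap R K q.content) * q.primPart.map (algebraMap R K) =
      C (algebraMap R K b) * p := by
    rw [← map_C, ← Polynomial.map_mul, ← eq_C_content_mul_primPart, hbp, Algebra.smul_def,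
      Polynomial.algebraMap_apply]
  have hw := associated_unit_mul_left (q.primPart.map (algebraMap R K)) _ (isUnit_C.mpr hc'.isUnit)
  rw [hsplit] at hw
  exact hw.symm.trans (associated_unit_mul_left p _ (isUnit_C.mpr hb'.isUnit))

theorem exists_dvd_dvd_of_resultant_eq_zero {R : Type*} [CommRing R] [IsDomain R]
    [NormalizedGCDMonoid R] {f g : R[X]} (h : resultant f g = 0) :
    ∃ w : R[X], 1 ≤ w.natDegree ∧ w ∣ f ∧ w ∣ g := by
  set K := FractionRing R
  have hinj := IsFractionRing.injective R K
  have hK : resultant (f.map (algebraMap R K)) (g.map (algebraMap R K)) = 0 := by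
    rw [natDegree_map_eq_of_injective hinj, natDegree_map_eq_of_injective hinj,
      resultant_map_map, h, map_zero]
  obtain ⟨hne, hcop⟩ := resultant_eq_zero_iff.mp hK
  rw [← isRelPrime_iff_isCoprime, IsRelPrime] at hcop
  push Not at hcop
  obtain ⟨d, hdf, hdg, hd⟩ := hcop
  have hd0 : d ≠ 0 := by
    rintro rfl
    rcases hne with hne | hne <;> exact hne (zero_dvd_iff.mp ‹_›)
  obtain ⟨w, hw, hwd⟩ := exists_isPrimitive_map_associated (R := R) hd0
  refine ⟨w, ?_, hw.dvd_of_fraction_map_dvd_fraction_map (hwd.dvd.trans hdf),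
    hw.dvd_of_fraction_map_dvd_fraction_map (hwd.dvd.trans hdg)⟩
  rw [← natDegree_map_eq_of_injective hinj, natDegree_eq_of_degree_eq
    (degree_eq_degree_of_associated hwd)]
  exact natDegree_pos_iff_degree_pos.mpr (degree_pos_of_ne_zero_of_nonunit hd0 hd)

theorem statement17_general (F : Type*) [Field F] (α : F) (N : ℕ)
    (P V U G H : Polynomial (Polynomial F))
    (hP : 1 ≤ P.natDegree)
    (hH : 1 ≤ (H.map (Polynomial.evalRingHom α)).natDegree)
    (hPGH : (Polynomial.C (Polynomial.X - Polynomial.C α)) ^ N ∣ (P - G * H))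
    (hVUH : (Polynomial.C (Polynomial.X - Polynomial.C α)) ^ N ∣ (V - U * H))
    (hNlarge : V.natDegree * degX P + P.natDegree * degX V < N) :
    ∃ W : Polynomial (Polynomial F), 1 ≤ W.natDegree ∧ W ∣ P ∧ W ∣ V := by
  classical
  by_cases hres : resultant P V = 0
  · exact exists_dvd_dvd_of_resultant_eq_zero hres
  exfalso
  obtain ⟨p, q, -, -, hpq⟩ :=
    exists_mul_add_mul_eq_C_resultant P V le_rfl le_rfl (Or.inl (Nat.one_le_iff_ne_zero.mp hP))
  obtain ⟨P₁, hP₁⟩ := hPGH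
  obtain ⟨V₁, hV₁⟩ := hVUH
  have hrel : C (resultant P V) =
      (p * G + q * U) * H + C (X - C α) ^ N * (p * P₁ + q * V₁) := by
    rw [← hpq, eq_add_of_sub_eq hP₁, eq_add_of_sub_eq hV₁]
    ring
  have hdvd := X_sub_C_pow_dvd_of_C_eq_mul_add hH hrel
  have hdeg := (natDegree_le_of_dvd hdvd hres).trans (natDegree_resultant_le P V _ _)
  rw [natDegree_pow, natDegree_X_sub_C, mul_one] at hdeg
  omega

theorem statement17 (F : Type*) [Field F] (α : F) (N : ℕ) (hN : 1 ≤ N)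
    (P V U G H : Polynomial (Polynomial F))
    (hP : 1 ≤ P.natDegree) (hV : 1 ≤ V.natDegree)
    (hH : 1 ≤ (H.map (Polynomial.evalRingHom α)).natDegree)
    (hPGH : (Polynomial.C (Polynomial.X - Polynomial.C α)) ^ N ∣ (P - G * H))
    (hVUH : (Polynomial.C (Polynomial.X - Polynomial.C α)) ^ N ∣ (V - U * H))
    (hNlarge : V.natDegree * degX P + P.natDegree * degX V < N) :
    ∃ W : Polynomial (Polynomial F), 1 ≤ W.natDegree ∧ W ∣ P ∧ W ∣ V :=
  statement17_general F α N P V U G H hP hH hPGH hVUH hNlarge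
end
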